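/- arXiv:2512.09747 — 6 statements merged into one kernel-verified Lean document; each statement's English description precedes it below -/
import Mathlib

section
/- Let k ≥ 5 be an integer and let G be a simple graph with at most 2k−1 vertices in which at most one vertex has degree k−2 and every other vertex has degree exactly k−1. Then G is (k−2)-edge-connected; that is, for every set M of at most k−3 edges, the graph G − M is connected. -/
/-- If `G` has at most `2k-1` vertices (`k ≥ 5`), at most one vertex
has degree `k-2` and all other vertices have degree `k-1`, then `G` is
`(k-2)`-edge-connected: deleting any set of at most `k-3` edges leaves it connected. -/
theorem stmt_1 {V : Type*} [Fintype V] [Nonempty V] (k : ℕ) (hk : 5 ≤ k)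
    (G : SimpleGraph V) [DecidableRel G.Adj]
    (hcard : Fintype.card V ≤ 2 * k - 1)
    (hone : ({v : V | G.degree v = k - 2}).Subsingleton)
    (hdeg : ∀ v : V, G.degree v ≠ k - 2 → G.degree v = k - 1) :
    ∀ M : Set (Sym2 V), M ⊆ G.edgeSet → M.ncard ≤ k - 3 →
      (G.deleteEdges M).Connected := by
  classical
  intro M hM hMcard
  by_contra hnc
  set G' := G.deleteEdges M with hG'
  -- Extract two mutually unreachable vertices
  rw [SimpleGraph.connected_iff] at hnc
  push_neg at hnc
  have hpre : ¬ G'.Preconnected := fun h => not_isEmpty_of_nonempty V (hnc h)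
  obtain ⟨u, v, huv⟩ : ∃ u v, ¬ G'.Reachable u v := by
    by_contra h; push_neg at h; exact hpre fun a b => h a b
  set S : Finset V := Finset.univ.filter (fun w => G'.Reachable u w) with hS
  have hu : u ∈ S := by
    simp only [hS, Finset.mem_filter, Finset.mem_univ, true_and]
    exact SimpleGraph.Reachable.refl u
  have hvS : v ∉ S := by simp [hS]; exact huv
  -- The key counting argument, applied to a small side with no crossing G'-edges
  have key : ∀ T : Finset V, T.Nonempty → T.card ≤ k - 1 →
      (∀ a ∈ T, ∀ b, b ∉ T → ¬ G'.Adj a b) → False := by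
    intro T hTne hTcard hcross
    set s := T.card with hs
    have hs1 : 1 ≤ s := Finset.card_pos.mpr hTne
    -- crossing pairs of G
    set D : Finset (V × V) :=
      (T ×ˢ (Finset.univ \ T)).filter (fun p => G.Adj p.1 p.2) with hD
    -- Step A : D.card ≤ M.ncard
    have hMfin : M.Finite := Set.toFinite M
    have hDM : D.card ≤ M.ncard := by
      rw [Set.ncard_eq_toFinset_card M hMfin]
      refine Finset.card_le_card_of_injOn (fun p => s(p.1, p.2)) ?_ ?_
      · intro p hp
        replace hp : p ∈ D := hp
        simp only [hD, Finset.mem_filter, Finset.mem_product, Finset.mem_sdiff] at hp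
        obtain ⟨⟨hp1, _, hp2⟩, hadj⟩ := hp
        have hnadj := hcross p.1 hp1 p.2 hp2
        rw [hG', SimpleGraph.deleteEdges_adj] at hnadj
        push_neg at hnadj
        simpa [Set.Finite.mem_toFinset] using hnadj hadj
      · intro p hp q hq hpq
        simp only [hD, Finset.coe_filter, Set.mem_setOf_eq, Finset.mem_product,
          Finset.mem_sdiff, Finset.mem_univ, true_and] at hp hq
        rw [Sym2.eq_iff] at hpq
        rcases hpq with ⟨h1, h2⟩ | ⟨h1, h2⟩
        · exact Prod.ext h1 h2
        · exact absurd (h1 ▸ hp.1.1) hq.1.2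
    -- Step B : D.card as a sum
    have hDsum : D.card = ∑ a ∈ T, (G.neighborFinset a \ T).card := by
      rw [Finset.card_eq_sum_card_fiberwise (f := Prod.fst) (t := T)
        (fun p hp => by
          replace hp : p ∈ D := hp
          simp only [hD, Finset.mem_filter, Finset.mem_product] at hp
          exact hp.1.1)]
      refine Finset.sum_congr rfl fun a ha => ?_
      have : D.filter (fun p => p.1 = a) = {a} ×ˢ (G.neighborFinset a \ T) := by
        ext ⟨x, y⟩
        simp only [hD, Finset.mem_filter, Finset.mem_product, Finset.mem_sdiff,
          Finset.mem_univ, true_and, Finset.mem_singleton, SimpleGraph.mem_neighborFinset]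
        constructor
        · rintro ⟨⟨⟨hx, hy⟩, hadj⟩, rfl⟩
          exact ⟨rfl, hadj, hy⟩
        · rintro ⟨rfl, hadj, hy⟩
          exact ⟨⟨⟨ha, hy⟩, hadj⟩, rfl⟩
      rw [this, Finset.card_product, Finset.card_singleton, one_mul]
    -- Step C : degree decomposition and bound on internal neighbors
    have hCdecomp : ∀ a ∈ T,
        (G.neighborFinset a ∩ T).card + (G.neighborFinset a \ T).card = G.degree a :=
      fun a _ => by rw [Finset.card_inter_add_card_sdiff]; rfl
    have hCint : ∀ a ∈ T, (G.neighborFinset a ∩ T).card ≤ s - 1 := by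
      intro a ha
      have hsub : G.neighborFinset a ∩ T ⊆ T.erase a := by
        intro x hx
        rw [Finset.mem_inter] at hx
        refine Finset.mem_erase.mpr ⟨?_, hx.2⟩
        intro hxa
        rw [hxa] at hx
        exact G.notMem_neighborFinset_self a hx.1
      calc (G.neighborFinset a ∩ T).card ≤ (T.erase a).card := Finset.card_le_card hsub
        _ = s - 1 := by rw [Finset.card_erase_of_mem ha]
    -- Step D : lower bound on degree sum
    have hDsumdeg : (k - 1) * s ≤ (∑ a ∈ T, G.degree a) + 1 := by
      by_cases h : ∃ v₀ ∈ T, G.degree v₀ = k - 2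
      · obtain ⟨v₀, hv₀T, hv₀d⟩ := h
        have herase : ∀ w ∈ T.erase v₀, G.degree w = k - 1 := by
          intro w hw
          rcases Finset.mem_erase.mp hw with ⟨hwne, hwT⟩
          refine hdeg w fun hwd => hwne (hone hwd hv₀d)
        have : (∑ a ∈ T, G.degree a) = (k - 2) + (s - 1) * (k - 1) := by
          rw [← Finset.add_sum_erase T _ hv₀T, hv₀d,
            Finset.sum_congr rfl herase, Finset.sum_const, smul_eq_mul,
            Finset.card_erase_of_mem hv₀T]
        rw [this]
        obtain ⟨c, hc⟩ : ∃ c, s = c + 1 := ⟨s - 1, by omega⟩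
        rw [hc]
        simp only [Nat.add_sub_cancel]
        have hexp : (k - 1) * (c + 1) = c * (k - 1) + (k - 1) := by ring
        rw [hexp]
        generalize c * (k - 1) = t
        omega
      · push_neg at h
        have : (∑ a ∈ T, G.degree a) = s * (k - 1) := by
          rw [Finset.sum_congr rfl (fun a ha => hdeg a (h a ha)), Finset.sum_const,
            smul_eq_mul]
        rw [this, mul_comm]
        omega
    -- Step E : combine everything
    have hsum_split : (∑ a ∈ T, G.degree a) =
        (∑ a ∈ T, (G.neighborFinset a ∩ T).card) + (∑ a ∈ T, (G.neighborFinset a \ T).card) := by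
      rw [← Finset.sum_add_distrib]
      exact (Finset.sum_congr rfl fun a ha => (hCdecomp a ha).symm)
    have hint_bound : (∑ a ∈ T, (G.neighborFinset a ∩ T).card) ≤ s * (s - 1) := by
      calc (∑ a ∈ T, (G.neighborFinset a ∩ T).card) ≤ T.card • (s - 1) :=
            Finset.sum_le_card_nsmul _ _ _ hCint
        _ = s * (s - 1) := by rw [smul_eq_mul]
    have hcut : (∑ a ∈ T, (G.neighborFinset a \ T).card) ≤ k - 3 := by
      rw [← hDsum]; exact hDM.trans hMcard
    -- final arithmetic, in ℤ
    have hks : s ≤ k - 1 := hTcard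
    have hfinal : (k - 1) * s ≤ s * (s - 1) + (k - 3) + 1 := by
      calc (k - 1) * s ≤ (∑ a ∈ T, G.degree a) + 1 := hDsumdeg
        _ = (∑ a ∈ T, (G.neighborFinset a ∩ T).card)
            + (∑ a ∈ T, (G.neighborFinset a \ T).card) + 1 := by rw [hsum_split]
        _ ≤ s * (s - 1) + (k - 3) + 1 :=
            Nat.add_le_add (Nat.add_le_add hint_bound hcut) le_rfl
    -- cast to integers
    have h1 : (1 : ℤ) ≤ (s : ℤ) := by exact_mod_cast hs1
    have h2 : (s : ℤ) ≤ (k : ℤ) - 1 := by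
      have : (s : ℤ) ≤ ((k - 1 : ℕ) : ℤ) := by exact_mod_cast hks
      omega
    have h5 : (5 : ℤ) ≤ (k : ℤ) := by exact_mod_cast hk
    zify [hs1, (show 1 ≤ k by omega), (show 3 ≤ k by omega)] at hfinal
    nlinarith [hfinal,
      mul_nonneg (by omega : (0:ℤ) ≤ (s:ℤ) - 1) (by omega : (0:ℤ) ≤ (k:ℤ) - (s:ℤ) - 1)]
  -- apply key to the smaller of S and its complement
  have hcardsum : S.card + (Finset.univ \ S).card = Fintype.card V := by
    have h1 := Finset.card_le_card (Finset.subset_univ S)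
    rw [Finset.card_univ] at h1
    rw [Finset.card_sdiff_of_subset (Finset.subset_univ S), Finset.card_univ]
    omega
  have hScross : ∀ a ∈ S, ∀ b, b ∉ S → ¬ G'.Adj a b := by
    intro a ha b hb hadj
    simp only [hS, Finset.mem_filter, Finset.mem_univ, true_and] at ha hb
    exact hb (ha.trans hadj.reachable)
  by_cases hsmall : S.card ≤ k - 1
  · exact key S ⟨u, hu⟩ hsmall hScross
  · refine key (Finset.univ \ S) ⟨v, by simp [hvS]⟩ (by omega) ?_
    intro a ha b hb hadj
    simp only [Finset.mem_sdiff, Finset.mem_univ, true_and, not_not] at ha hb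
    exact ha (hScross b hb a (by simpa using ha) hadj.symm).elim
end

section
/- Let k ≥ 1 and let c be an edge-coloring of the complete 3-uniform hypergraph K_n^3 on vertex set [n] such that the colored hypergraph contains no rainbow copy of the (k+1)-star F_{k+1}. Then for every vertex u there are at least n − k − 1 vertices v ≠ u with z_c(u,v) ≤ 3k, where z_c(u,v) is the number of distinct colors appearing on triples containing both u and v. -/
open Finset

/-- The number of distinct colors appearing on triples of `K_n^3` containing both
`u` and `v`. -/
def zc {n : ℕ} (c : Finset (Fin n) → ℕ) (u v : Fin n) : ℕ :=
  ((univ.filter fun w : Fin n => w ≠ u ∧ w ≠ v).image fun w => c {u, v, w}).card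

/-- The coloring `c` of `K_n^3` contains a rainbow copy of the `m`-star `F_m`:
a vertex `v` together with `m` pairwise disjoint pairs avoiding `v`, such that the `m`
resulting triples receive pairwise distinct colors. -/
def HasRainbowStar (n m : ℕ) (c : Finset (Fin n) → ℕ) : Prop :=
  ∃ (v : Fin n) (P : Finset (Finset (Fin n))),
    P.card = m ∧ (∀ p ∈ P, p.card = 2 ∧ v ∉ p) ∧
    (∀ p ∈ P, ∀ q ∈ P, p ≠ q → Disjoint p q) ∧
    Set.InjOn (fun p : Finset (Fin n) => c (insert v p)) (↑P : Set (Finset (Fin n)))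

lemma key {n k : ℕ} (c : Finset (Fin n) → ℕ) (u : Fin n) (B : Finset (Fin n))
    (hu : u ∉ B) (hB : ∀ v ∈ B, 3 * k < zc c u v) (hBcard : B.card ≤ k + 1) :
    ∀ S ⊆ B, ∃ g : Fin n → Fin n,
      (∀ v ∈ S, g v ≠ u ∧ g v ∉ B) ∧ Set.InjOn g ↑S ∧
      Set.InjOn (fun v => c {u, v, g v}) ↑S := by
  intro S
  induction S using Finset.induction_on with
  | empty => exact fun _ => ⟨id, by simp, by simp, by simp⟩
  | @insert v S' hvS' ih =>
    intro hsub
    have hvB : v ∈ B := hsub (mem_insert_self _ _)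
    have hS'B : S' ⊆ B := fun x hx => hsub (mem_insert_of_mem hx)
    obtain ⟨g, hg1, hg2, hg3⟩ := ih hS'B
    have hS'sub : S' ⊆ B.erase v := fun x hx =>
      mem_erase.mpr ⟨fun h => hvS' (h ▸ hx), hS'B hx⟩
    have hScard : S'.card ≤ k := by
      have h1 := card_le_card hS'sub
      have h2 := card_erase_of_mem hvB
      omega
    set F : Finset (Fin n) := (B.erase v) ∪ S'.image g with hF
    have hFcard : F.card ≤ 2 * k := by
      have h1 : (B.erase v).card ≤ k := by
        have := card_erase_of_mem hvB; omega
      have h2 : (S'.image g).card ≤ k := le_trans card_image_le hScard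
      rw [hF]
      have := card_union_le (B.erase v) (S'.image g)
      omega
    set T : Finset (Fin n) := univ.filter (fun w => w ≠ u ∧ w ≠ v) with hT
    set f : Fin n → ℕ := fun w => c {u, v, w} with hf
    have hzc : 3 * k < (T.image f).card := hB v hvB
    have himsub : T.image f ⊆ ((T \ F).image f) ∪ (F.image f) := by
      intro y hy
      obtain ⟨w, hw, rfl⟩ := mem_image.mp hy
      by_cases hwF : w ∈ F
      · exact mem_union_right _ (mem_image_of_mem f hwF)
      · exact mem_union_left _ (mem_image_of_mem f (mem_sdiff.mpr ⟨hw, hwF⟩))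
    have hcard2 : k < ((T \ F).image f).card := by
      have h1 := card_le_card himsub
      have h3 := card_union_le ((T \ F).image f) (F.image f)
      have h4 : (F.image f).card ≤ 2 * k := le_trans card_image_le hFcard
      omega
    set C : Finset ℕ := S'.image (fun v' => c {u, v', g v'}) with hC
    have hCcard : C.card ≤ k := le_trans card_image_le hScard
    have hns : ¬ ((T \ F).image f ⊆ C) := fun h => by
      have := card_le_card h; omega
    obtain ⟨y, hy, hyC⟩ := not_subset.mp hns
    obtain ⟨w, hw, rfl⟩ := mem_image.mp hy
    obtain ⟨hwT, hwF⟩ := mem_sdiff.mp hw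
    obtain ⟨hwu, hwv⟩ := (mem_filter.mp hwT).2
    have hwB : w ∉ B := fun h => hwF (mem_union_left _ (mem_erase.mpr ⟨hwv, h⟩))
    have hwg : w ∉ S'.image g := fun h => hwF (mem_union_right _ h)
    refine ⟨Function.update g v w, ?_, ?_, ?_⟩
    · intro x hx
      rcases mem_insert.mp hx with rfl | hx'
      · rw [Function.update_self]; exact ⟨hwu, hwB⟩
      · have hxv : x ≠ v := fun h => hvS' (h ▸ hx')
        rw [Function.update_of_ne hxv]; exact hg1 x hx'
    · intro a ha b hb hab
      rw [Finset.mem_coe, mem_insert] at ha hb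
      rcases ha with rfl | ha' <;> rcases hb with rfl | hb'
      · rfl
      · exfalso
        have hbv : b ≠ a := fun h => hvS' (h ▸ hb')
        rw [Function.update_self, Function.update_of_ne hbv] at hab
        exact hwg (hab ▸ mem_image_of_mem g hb')
      · exfalso
        have hav : a ≠ b := fun h => hvS' (h ▸ ha')
        rw [Function.update_self, Function.update_of_ne hav] at hab
        exact hwg (hab ▸ mem_image_of_mem g ha')
      · have hav : a ≠ v := fun h => hvS' (h ▸ ha')
        have hbv : b ≠ v := fun h => hvS' (h ▸ hb')
        rw [Function.update_of_ne hav, Function.update_of_ne hbv] at hab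
        exact hg2 ha' hb' hab
    · intro a ha b hb hab
      rw [Finset.mem_coe, mem_insert] at ha hb
      simp only at hab
      rcases ha with rfl | ha' <;> rcases hb with rfl | hb'
      · rfl
      · exfalso
        have hbv : b ≠ a := fun h => hvS' (h ▸ hb')
        rw [Function.update_self, Function.update_of_ne hbv] at hab
        have hfw : f w = c {u, b, g b} := hab
        rw [hfw] at hyC
        exact hyC (mem_image_of_mem _ hb')
      · exfalso
        have hav : a ≠ b := fun h => hvS' (h ▸ ha')
        rw [Function.update_self, Function.update_of_ne hav] at hab
        have hfw : f w = c {u, a, g a} := hab.symm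
        rw [hfw] at hyC
        exact hyC (mem_image_of_mem _ ha')
      · have hav : a ≠ v := fun h => hvS' (h ▸ ha')
        have hbv : b ≠ v := fun h => hvS' (h ▸ hb')
        rw [Function.update_of_ne hav, Function.update_of_ne hbv] at hab
        exact hg3 ha' hb' hab

/-- if an edge-coloring of `K_n^3` has no rainbow `F_{k+1}`, then for every
vertex `u` at least `n - k - 1` vertices `v ≠ u` satisfy `z_c(u,v) ≤ 3k`. -/
theorem stmt_7 (n k : ℕ) (hk : 1 ≤ k) (c : Finset (Fin n) → ℕ)
    (hc : ¬ HasRainbowStar n (k + 1) c) :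
    ∀ u : Fin n,
      n - k - 1 ≤ (univ.filter fun v : Fin n => v ≠ u ∧ zc c u v ≤ 3 * k).card := by
  intro u
  set Bfull := univ.filter (fun v : Fin n => v ≠ u ∧ 3 * k < zc c u v) with hBfull
  have hBk : Bfull.card ≤ k := by
    by_contra hlt
    push_neg at hlt
    obtain ⟨B, hBsub, hBcard⟩ := Finset.exists_subset_card_eq hlt
    have huB : u ∉ B := fun h => ((mem_filter.mp (hBsub h)).2.1) rfl
    have hB : ∀ v ∈ B, 3 * k < zc c u v := fun v hv => (mem_filter.mp (hBsub hv)).2.2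
    obtain ⟨g, hg1, hg2, hg3⟩ := key c u B huB hB (le_of_eq hBcard) B Subset.rfl
    apply hc
    have hpinj : Set.InjOn (fun v => ({v, g v} : Finset (Fin n))) ↑B := by
      intro a ha b hb hab
      simp only at hab
      have hmem : a ∈ ({b, g b} : Finset (Fin n)) := hab ▸ mem_insert_self a {g a}
      rcases mem_insert.mp hmem with h | h
      · exact h
      · rw [mem_singleton] at h
        exact absurd (h ▸ (Finset.mem_coe.mp ha)) (hg1 b hb).2
    refine ⟨u, B.image (fun v => {v, g v}), ?_, ?_, ?_, ?_⟩
    · rw [card_image_of_injOn hpinj, hBcard]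
    · intro p hp
      obtain ⟨v, hv, rfl⟩ := mem_image.mp hp
      have hvg : v ≠ g v := fun h => (hg1 v hv).2 (h ▸ hv)
      constructor
      · rw [card_insert_of_notMem (by simpa using hvg), card_singleton]
      · simp only [mem_insert, mem_singleton]
        push_neg
        exact ⟨fun h => huB (h ▸ hv), fun h => (hg1 v hv).1 h.symm⟩
    · intro p hp q hq hpq
      obtain ⟨v, hv, rfl⟩ := mem_image.mp hp
      obtain ⟨v', hv', rfl⟩ := mem_image.mp hq
      have hvv' : v ≠ v' := fun h => hpq (by rw [h])
      rw [Finset.disjoint_left]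
      intro a ha ha'
      simp only [mem_insert, mem_singleton] at ha ha'
      rcases ha with h1 | h1 <;> rcases ha' with h2 | h2
      · exact hvv' (h1.symm.trans h2)
      · exact (hg1 v' hv').2 ((h1.symm.trans h2) ▸ hv)
      · exact (hg1 v hv).2 (by rw [h1.symm.trans h2]; exact hv')
      · exact hvv' (hg2 (Finset.mem_coe.mpr hv) (Finset.mem_coe.mpr hv') (h1.symm.trans h2))
    · intro p hp q hq hpq
      rw [Finset.mem_coe] at hp hq
      obtain ⟨v, hv, rfl⟩ := mem_image.mp hp
      obtain ⟨v', hv', rfl⟩ := mem_image.mp hq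
      simp only at hpq
      have : v = v' := hg3 (Finset.mem_coe.mpr hv) (Finset.mem_coe.mpr hv') hpq
      rw [this]
  -- counting
  have e0 : (univ.erase u).card = n - 1 := by
    rw [card_erase_of_mem (mem_univ u), card_univ, Fintype.card_fin]
  have hsplit := card_filter_add_card_filter_not
    (s := univ.erase u) (p := fun v : Fin n => zc c u v ≤ 3 * k)
  have e1 : (univ.erase u).filter (fun v => zc c u v ≤ 3 * k)
      = univ.filter (fun v : Fin n => v ≠ u ∧ zc c u v ≤ 3 * k) := by
    ext v; simp [mem_erase, and_comm]
  have e2 : (univ.erase u).filter (fun v => ¬ zc c u v ≤ 3 * k) = Bfull := by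
    ext v; simp [hBfull, mem_erase, not_le, and_comm]
  rw [e0, e1, e2] at hsplit
  omega
end

section
/- Let k ≥ 1, n > 5k + 13, and let c be an edge-coloring of K_n^3 containing no rainbow copy of F_{k+1}. Then there exist 2k+6 pairwise vertex-disjoint pairs {u_1,v_1}, …, {u_{2k+6}, v_{2k+6}} of vertices such that z_c(u_i, v_i) ≤ 3k for each i. -/
/-!
A vertex `v` has at most `k` bad partners: given `k + 1` of them, a rainbow `F_{k+1}` centred
at `v` can be built greedily, since each bad partner sees more than `3k` colors together with `v`
while the earlier petals block at most `2k` vertices and `k` colors. So every vertex forms a good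
pair with all but at most `k + 1` vertices (itself included), and a fixed set `U` of `2k + 6`
vertices can be greedily matched to distinct good partners outside `U` once `n > 5k + 12`.
-/

open Finset

section Greedy

variable {α β : Type*} [DecidableEq α] [DecidableEq β]

lemma exists_mem_notMem_of_card_lt_card_image {A F : Finset α} {C : Finset β} {f : α → β}
    (h : #C + #F < #(A.image f)) : ∃ a ∈ A, a ∉ F ∧ f a ∉ C := by
  have hA : #(A.image f) ≤ #((A \ F).image f) + #F :=
    calc #(A.image f) ≤ #((A \ F).image f ∪ F.image f) := by
          rw [← image_union, sdiff_union_self_eq_union]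
          exact card_le_card (image_subset_image subset_union_left)
      _ ≤ #((A \ F).image f) + #(F.image f) := card_union_le _ _
      _ ≤ #((A \ F).image f) + #F := by gcongr; exact card_image_le
  obtain ⟨b, hb, hbC⟩ :=
    exists_mem_notMem_of_card_lt_card (s := C) (t := (A \ F).image f) (by omega)
  obtain ⟨a, ha, rfl⟩ := mem_image.mp hb
  exact ⟨a, (mem_sdiff.mp ha).1, (mem_sdiff.mp ha).2, hbC⟩

lemma exists_injOn_rainbow_of_extend (T : Finset α) (P : α → α → Prop) (col : α → α → β)
    (hext : ∀ S ⊆ T, ∀ u ∈ T, u ∉ S → ∀ g : α → α,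
      ∃ w, P u w ∧ w ∉ S.image g ∧ col u w ∉ S.image fun x => col x (g x)) :
    ∃ f : α → α, (∀ u ∈ T, P u (f u)) ∧ Set.InjOn f T ∧ Set.InjOn (fun u => col u (f u)) T := by
  induction T using Finset.induction_on with
  | empty => exact ⟨id, by simp, by simp, by simp⟩
  | insert a S haS ih =>
    obtain ⟨f, hP, hinj, hcol⟩ := ih fun S' hS' u hu => hext S' (hS'.trans (subset_insert a S)) u
      (mem_insert_of_mem hu)
    obtain ⟨w, hPw, hwf, hwc⟩ := hext S (subset_insert a S) a (mem_insert_self a S) haS f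
    have heq : Set.EqOn f (Function.update f a w) S := fun x hx =>
      (Function.update_of_ne (ne_of_mem_of_not_mem hx haS) _ _).symm
    refine ⟨Function.update f a w, ?_, ?_, ?_⟩
    · intro u hu
      rcases mem_insert.mp hu with rfl | hu
      · simpa using hPw
      · simpa [← heq hu] using hP u hu
    · rw [coe_insert, Set.injOn_insert haS]
      refine ⟨hinj.congr heq, ?_⟩
      simpa [← heq.image_eq] using hwf
    · have heqc : Set.EqOn (fun u => col u (f u)) (fun u => col u (Function.update f a w u)) S :=
        fun x hx => by simp only [← heq hx]
      rw [coe_insert, Set.injOn_insert haS]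
      refine ⟨hcol.congr heqc, ?_⟩
      simpa [← heqc.image_eq] using hwc

end Greedy

section Pairs

variable {α : Type*} [DecidableEq α] {T : Finset α} {f : α → α}

lemma card_image_pair (hf : ∀ u ∈ T, f u ∉ T) : #(T.image fun u => ({u, f u} : Finset α)) = #T := by
  refine card_image_of_injOn fun u hu u' hu' h => ?_
  have : u ∈ ({u', f u'} : Finset α) := (congrArg (u ∈ ·) h).mp (mem_insert_self u _)
  rcases mem_insert.mp this with h | h
  · exact h
  · exact absurd (mem_singleton.mp h ▸ hu) (hf u' hu')

lemma card_eq_two_of_mem_image_pair (hf : ∀ u ∈ T, f u ∉ T) {p : Finset α}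
    (hp : p ∈ T.image fun u => ({u, f u} : Finset α)) : #p = 2 := by
  obtain ⟨u, hu, rfl⟩ := mem_image.mp hp
  exact card_pair fun h => hf u hu (h ▸ hu)

lemma disjoint_of_mem_image_pair (hf : ∀ u ∈ T, f u ∉ T) (hinj : Set.InjOn f T) {p q : Finset α}
    (hp : p ∈ T.image fun u => ({u, f u} : Finset α))
    (hq : q ∈ T.image fun u => ({u, f u} : Finset α)) (hpq : p ≠ q) : Disjoint p q := by
  obtain ⟨u, hu, rfl⟩ := mem_image.mp hp
  obtain ⟨u', hu', rfl⟩ := mem_image.mp hq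
  have huu' : u ≠ u' := by rintro rfl; exact hpq rfl
  have hfu : f u ≠ f u' := fun h => huu' (hinj hu hu' h)
  have hfuT := hf u hu
  have hfu'T := hf u' hu'
  simp only [disjoint_insert_left, disjoint_insert_right, disjoint_singleton, mem_insert,
    mem_singleton]
  grind

lemma rel_of_mem_image_pair {r : α → α → Prop} (hr : ∀ a b, r a b → r b a)
    (hrf : ∀ u ∈ T, r u (f u)) {p : Finset α} (hp : p ∈ T.image fun u => ({u, f u} : Finset α)) :
    ∀ a ∈ p, ∀ b ∈ p, a ≠ b → r a b := by
  obtain ⟨u, hu, rfl⟩ := mem_image.mp hp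
  simp only [mem_insert, mem_singleton]
  rintro a (rfl | rfl) b (rfl | rfl) hab
  · exact absurd rfl hab
  · exact hrf a hu
  · exact hr _ _ (hrf b hu)
  · exact absurd rfl hab

end Pairs

section RainbowStar

variable {n : ℕ} (c : Finset (Fin n) → ℕ)

lemma zc_comm (u v : Fin n) : zc c u v = zc c v u := by
  unfold zc
  simp_rw [and_comm (a := _ ≠ u), insert_comm u v]

/-- The vertices `u` for which `{u, v}` is not a good pair. -/
def badPartners (k : ℕ) (v : Fin n) : Finset (Fin n) :=
  univ.filter fun u => u ≠ v ∧ 3 * k < zc c u v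

lemma hasRainbowStar_of_injOn {v : Fin n} {T : Finset (Fin n)} (hvT : v ∉ T) {f : Fin n → Fin n}
    (hf : ∀ u ∈ T, f u ∉ T ∧ f u ≠ v) (hinj : Set.InjOn f T)
    (hcol : Set.InjOn (fun u => c {u, v, f u}) T) : HasRainbowStar n #T c := by
  have hfT : ∀ u ∈ T, f u ∉ T := fun u hu => (hf u hu).1
  refine ⟨v, T.image fun u => {u, f u}, card_image_pair hfT,
    fun p hp => ⟨card_eq_two_of_mem_image_pair hfT hp, ?_⟩,
    fun p hp q hq => disjoint_of_mem_image_pair hfT hinj hp hq, ?_⟩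
  · obtain ⟨u, hu, rfl⟩ := mem_image.mp hp
    simp only [mem_insert, mem_singleton, not_or]
    exact ⟨fun h => hvT (h ▸ hu), fun h => (hf u hu).2 h.symm⟩
  · rw [coe_image]
    refine Set.InjOn.image_of_comp (hcol.congr fun u _ => ?_)
    simp only [Function.comp, insert_comm]

lemma card_badPartners_le {k : ℕ} (hc : ¬ HasRainbowStar n (k + 1) c) (v : Fin n) :
    #(badPartners c k v) ≤ k := by
  by_contra! hbig
  obtain ⟨T, hTbad, hTcard⟩ := exists_subset_card_eq (n := k + 1) hbig
  have hbad : ∀ u ∈ T, u ≠ v ∧ 3 * k < zc c u v := fun u hu => (mem_filter.mp (hTbad hu)).2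
  obtain ⟨f, hf, hinj, hcol⟩ := exists_injOn_rainbow_of_extend T (fun _ w => w ∉ T ∧ w ≠ v)
    (fun u w => c {u, v, w}) fun S hST u hu huS g => by
      have hS : #S ≤ k := by
        have := card_le_card (subset_erase.mpr ⟨hST, huS⟩)
        rw [card_erase_of_mem hu, hTcard] at this
        omega
      obtain ⟨w, hw, hwF, hwC⟩ := exists_mem_notMem_of_card_lt_card_image
        (A := univ.filter fun w => w ≠ u ∧ w ≠ v) (F := T.erase u ∪ S.image g)
        (C := S.image fun x => c {x, v, g x}) (f := fun w => c {u, v, w}) (by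
          have := card_union_le (T.erase u) (S.image g)
          have := card_image_le (s := S) (f := g)
          have := card_image_le (s := S) (f := fun x => c {x, v, g x})
          have := card_erase_of_mem hu
          have := (hbad u hu).2
          unfold zc at this
          omega)
      obtain ⟨hwu, hwv⟩ := (mem_filter.mp hw).2
      simp only [mem_union, mem_erase, not_or, not_and] at hwF
      exact ⟨w, ⟨fun hwT => hwF.1 hwu hwT, hwv⟩, hwF.2, hwC⟩
  rw [← hTcard] at hc
  exact hc (hasRainbowStar_of_injOn c (fun hvT => (hbad v hvT).1 rfl) hf hinj hcol)

lemma exists_good_partner_notMem {k : ℕ} (hc : ¬ HasRainbowStar n (k + 1) c) (u : Fin n)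
    {F : Finset (Fin n)} (hF : #F + k + 1 < n) : ∃ w ∉ F, w ≠ u ∧ zc c u w ≤ 3 * k := by
  have hcard : #(F ∪ insert u (badPartners c k u)) < #(univ : Finset (Fin n)) := by
    have := card_union_le F (insert u (badPartners c k u))
    have := card_insert_le u (badPartners c k u)
    have := card_badPartners_le c hc u
    rw [card_univ, Fintype.card_fin]
    omega
  obtain ⟨w, -, hw⟩ := exists_mem_notMem_of_card_lt_card hcard
  simp only [mem_union, mem_insert, badPartners, mem_filter, mem_univ, true_and, not_or,
    not_and, not_lt] at hw
  exact ⟨w, hw.1, hw.2.1, zc_comm c u w ▸ hw.2.2 hw.2.1⟩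

end RainbowStar

theorem stmt_8_general (n k : ℕ) (hn : 5 * k + 13 < n)
    (c : Finset (Fin n) → ℕ) (hc : ¬ HasRainbowStar n (k + 1) c) :
    ∃ P : Finset (Finset (Fin n)),
      P.card = 2 * k + 6 ∧ (∀ p ∈ P, p.card = 2) ∧
      (∀ p ∈ P, ∀ q ∈ P, p ≠ q → Disjoint p q) ∧
      (∀ p ∈ P, ∀ u ∈ p, ∀ v ∈ p, u ≠ v → zc c u v ≤ 3 * k) := by
  obtain ⟨U, -, hU⟩ := exists_subset_card_eq (s := (univ : Finset (Fin n))) (n := 2 * k + 6)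
    (by rw [card_univ, Fintype.card_fin]; omega)
  obtain ⟨f, hf, hinj, -⟩ := exists_injOn_rainbow_of_extend U
    (fun u w => w ∉ U ∧ zc c u w ≤ 3 * k) (fun _ w => w) fun S hSU u hu huS g => by
      have hS : #S + 1 ≤ #U := by
        rw [← card_insert_of_notMem huS]
        exact card_le_card (insert_subset hu hSU)
      obtain ⟨w, hw, -, hgood⟩ := exists_good_partner_notMem c hc u (F := U ∪ S.image g) (by
        have := card_union_le U (S.image g)
        have := card_image_le (s := S) (f := g)
        omega)
      simp only [mem_union, not_or] at hw
      exact ⟨w, ⟨hw.1, hgood⟩, hw.2, hw.2⟩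
  have hfU : ∀ u ∈ U, f u ∉ U := fun u hu => (hf u hu).1
  exact ⟨U.image fun u => {u, f u}, (card_image_pair hfU).trans hU,
    fun p => card_eq_two_of_mem_image_pair hfU,
    fun p hp q hq => disjoint_of_mem_image_pair hfU hinj hp hq,
    fun p => rel_of_mem_image_pair (fun a b h => zc_comm c a b ▸ h) fun u hu => (hf u hu).2⟩

/-- if `n > 5k + 13` and an edge-coloring of `K_n^3` has no rainbow
`F_{k+1}`, then there exist `2k + 6` pairwise vertex-disjoint good pairs, i.e. pairs
`{u, v}` with `z_c(u, v) ≤ 3k`. -/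
theorem stmt_8 (n k : ℕ) (hk : 1 ≤ k) (hn : 5 * k + 13 < n)
    (c : Finset (Fin n) → ℕ) (hc : ¬ HasRainbowStar n (k + 1) c) :
    ∃ P : Finset (Finset (Fin n)),
      P.card = 2 * k + 6 ∧ (∀ p ∈ P, p.card = 2) ∧
      (∀ p ∈ P, ∀ q ∈ P, p ≠ q → Disjoint p q) ∧
      (∀ p ∈ P, ∀ u ∈ p, ∀ v ∈ p, u ≠ v → zc c u v ≤ 3 * k) :=
  stmt_8_general n k hn c hc
end

section
/- Let k be odd with two disjoint k-sets S, R ⊆ [n], and let F be the 3-uniform hypergraph on [n] whose edges are all triples T with |T ∩ S| ≥ 2 and T ∩ R = ∅, together with all triples T with |T ∩ R| ≥ 2 and T ∩ S = ∅. Then F contains no k-star F_k, i.e., no vertex v has k pairwise disjoint edges in its link. -/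
/-!
Let `v` be the centre of a star with `k` disjoint pairs. If `v ∈ S`, every edge through `v`
is of the first kind, so every pair meets `S ∖ {v}`, a set of only `k - 1` vertices; the case
`v ∈ R` is symmetric. If `v ∉ S ∪ R`, each pair lies inside `S` or inside `R`, so disjointness
allows at most `⌊k/2⌋` pairs in each, and `2⌊k/2⌋ < k` because `k` is odd.
-/

open Finset

/-- The extremal construction `𝓕_k^o`: triples meeting `S` in at least two vertices and
avoiding `R`, together with triples meeting `R` in at least two vertices and avoiding `S`. -/
def extremalOdd (n : ℕ) (S R : Finset (Fin n)) : Finset (Finset (Fin n)) :=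
  (univ.powersetCard 3).filter fun T =>
    (2 ≤ (T ∩ S).card ∧ T ∩ R = ∅) ∨ (2 ≤ (T ∩ R).card ∧ T ∩ S = ∅)

/-- The 3-graph `H` contains a `k`-star: a vertex `v` and `k` pairwise disjoint pairs
avoiding `v` each of which forms an edge of `H` with `v`. -/
def HasStar {n : ℕ} (H : Finset (Finset (Fin n))) (k : ℕ) : Prop :=
  ∃ (v : Fin n) (P : Finset (Finset (Fin n))),
    P.card = k ∧ (∀ p ∈ P, p.card = 2 ∧ v ∉ p ∧ insert v p ∈ H) ∧
    (∀ p ∈ P, ∀ q ∈ P, p ≠ q → Disjoint p q)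

section DisjointFamily

variable {α : Type*} [DecidableEq α] {P : Finset (Finset α)} {A : Finset α}

lemma mul_card_le_card_of_le_card_inter {m : ℕ} (hP : (P : Set (Finset α)).PairwiseDisjoint id)
    (hm : ∀ p ∈ P, m ≤ #(p ∩ A)) : m * #P ≤ #A :=
  calc m * #P = ∑ _p ∈ P, m := by rw [sum_const, smul_eq_mul, mul_comm]
    _ ≤ ∑ p ∈ P, #(p ∩ A) := sum_le_sum hm
    _ = #(P.biUnion (· ∩ A)) :=
      (card_biUnion fun p hp q hq hpq => (hP hp hq hpq).mono inf_le_left inf_le_left).symm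
    _ ≤ #A := card_le_card (biUnion_subset.2 fun _ _ => inter_subset_right)

lemma two_mul_card_filter_subset_le (hP : (P : Set (Finset α)).PairwiseDisjoint id)
    (hP₂ : ∀ p ∈ P, #p = 2) : 2 * #{p ∈ P | p ⊆ A} ≤ #A := by
  refine mul_card_le_card_of_le_card_inter (hP.subset (coe_subset.2 (filter_subset _ _))) ?_
  intro p hp
  obtain ⟨hpP, hpA⟩ := mem_filter.1 hp
  rw [inter_eq_left.2 hpA, hP₂ p hpP]

end DisjointFamily

section ExtremalOdd

variable {n : ℕ} {S R p : Finset (Fin n)} {v : Fin n}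

lemma extremalOdd_comm (S R : Finset (Fin n)) : extremalOdd n S R = extremalOdd n R S := by
  simp only [extremalOdd, or_comm]

lemma one_le_card_inter_of_insert_mem_extremalOdd (hvS : v ∈ S) (hvp : v ∉ p)
    (h : insert v p ∈ extremalOdd n S R) : 1 ≤ #(p ∩ S) := by
  rcases (mem_filter.1 h).2 with ⟨hS, -⟩ | ⟨-, hS⟩
  · rw [insert_inter_of_mem hvS, card_insert_of_notMem fun h => hvp (mem_inter.1 h).1] at hS
    omega
  · exact absurd (mem_inter.2 ⟨mem_insert_self v p, hvS⟩) (hS ▸ notMem_empty v)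

lemma subset_of_two_le_card_inter (hp : #p = 2) (h : 2 ≤ #(p ∩ S)) : p ⊆ S :=
  inter_eq_left.1 (eq_of_subset_of_card_le inter_subset_left (hp ▸ h))

lemma subset_or_subset_of_insert_mem_extremalOdd (hvS : v ∉ S) (hvR : v ∉ R) (hp : #p = 2)
    (h : insert v p ∈ extremalOdd n S R) : p ⊆ S ∨ p ⊆ R := by
  rcases (mem_filter.1 h).2 with ⟨hS, -⟩ | ⟨hR, -⟩
  · rw [insert_inter_of_notMem hvS] at hS
    exact .inl (subset_of_two_le_card_inter hp hS)
  · rw [insert_inter_of_notMem hvR] at hR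
    exact .inr (subset_of_two_le_card_inter hp hR)

variable {P : Finset (Finset (Fin n))}

lemma card_le_card_sub_one_of_center_mem (hvS : v ∈ S)
    (hP : ∀ p ∈ P, #p = 2 ∧ v ∉ p ∧ insert v p ∈ extremalOdd n S R)
    (hdisj : (P : Set (Finset (Fin n))).PairwiseDisjoint id) : #P ≤ #S - 1 := by
  have h := mul_card_le_card_of_le_card_inter (m := 1) (A := S.erase v) hdisj fun p hp => by
    obtain ⟨-, hvp, hedge⟩ := hP p hp
    rw [inter_erase, erase_eq_of_notMem fun h => hvp (mem_inter.1 h).1]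
    exact one_le_card_inter_of_insert_mem_extremalOdd hvS hvp hedge
  rwa [one_mul, card_erase_of_mem hvS] at h

lemma card_le_half_add_half_of_center_notMem (hvS : v ∉ S) (hvR : v ∉ R)
    (hP : ∀ p ∈ P, #p = 2 ∧ v ∉ p ∧ insert v p ∈ extremalOdd n S R)
    (hdisj : (P : Set (Finset (Fin n))).PairwiseDisjoint id) : #P ≤ #S / 2 + #R / 2 := by
  have hP₂ : ∀ p ∈ P, #p = 2 := fun p hp => (hP p hp).1
  have hcover : P ⊆ {p ∈ P | p ⊆ S} ∪ {p ∈ P | p ⊆ R} := fun p hp => by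
    rcases subset_or_subset_of_insert_mem_extremalOdd hvS hvR (hP p hp).1 (hP p hp).2.2 with h | h
    · exact mem_union_left _ (mem_filter.2 ⟨hp, h⟩)
    · exact mem_union_right _ (mem_filter.2 ⟨hp, h⟩)
  have hS := two_mul_card_filter_subset_le (A := S) hdisj hP₂
  have hR := two_mul_card_filter_subset_le (A := R) hdisj hP₂
  have := (card_le_card hcover).trans (card_union_le _ _)
  omega

end ExtremalOdd

theorem stmt_9_general (n k : ℕ) (hk : Odd k)
    (S R : Finset (Fin n)) (hS : S.card = k) (hR : R.card = k) :
    ¬ HasStar (extremalOdd n S R) k := by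
  rintro ⟨v, P, rfl, hP, hdisj⟩
  have hdisj : (P : Set (Finset (Fin n))).PairwiseDisjoint id := fun p hp q hq =>
    hdisj p hp q hq
  have hpos := hk.pos
  by_cases hvS : v ∈ S
  · have := card_le_card_sub_one_of_center_mem hvS hP hdisj
    omega
  by_cases hvR : v ∈ R
  · rw [extremalOdd_comm] at hP
    have := card_le_card_sub_one_of_center_mem hvR hP hdisj
    omega
  have := card_le_half_add_half_of_center_notMem hvS hvR hP hdisj
  obtain ⟨m, hm⟩ := hk
  omega

/-- for odd `k` and disjoint `k`-sets `S, R ⊆ [n]`, the 3-graph whose edges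
are the triples meeting `S` in at least two vertices and avoiding `R`, together with the
triples meeting `R` in at least two vertices and avoiding `S`, contains no `k`-star. -/
theorem stmt_9 (n k : ℕ) (hk : Odd k) (hn : 2 * k ≤ n)
    (S R : Finset (Fin n)) (hS : S.card = k) (hR : R.card = k) (hSR : Disjoint S R) :
    ¬ HasStar (extremalOdd n S R) k :=
  stmt_9_general n k hk S R hS hR
end

section
/- For all n ≥ 3, the maximum number of edges in a 3-uniform hypergraph on n vertices containing no two disjoint edges sharing a common vertex pattern of a 2-star (i.e., no vertex whose link graph contains a matching of size 2) is n if n ≡ 0 (mod 4), n−1 if n ≡ 1 (mod 4), and n−2 if n ≡ 2, 3 (mod 4). -/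
open Finset

/-- A 3-uniform hypergraph is `F₂`-free if no two of its edges share exactly one vertex. -/
def F2Free {n : ℕ} (H : Finset (Finset (Fin n))) : Prop :=
  ∀ e₁ ∈ H, ∀ e₂ ∈ H, (e₁ ∩ e₂).card ≠ 1

/-- `f(n,2)`: the maximum number of edges in an `F₂`-free 3-uniform hypergraph on `n`
vertices. -/
noncomputable def fn2 (n : ℕ) : ℕ :=
  sSup {m | ∃ H : Finset (Finset (Fin n)),
    (∀ e ∈ H, e.card = 3) ∧ F2Free H ∧ H.card = m}

variable {n : ℕ}

lemma inter_two {H : Finset (Finset (Fin n))} (hF : F2Free H)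
    {e f : Finset (Fin n)} (he : e ∈ H) (hf : f ∈ H)
    (hne : (f ∩ e).Nonempty) : 2 ≤ (f ∩ e).card := by
  have h1 := hF f hf e he
  have h2 := card_pos.mpr hne
  omega

lemma meets_trans {H : Finset (Finset (Fin n))} (h3 : ∀ e ∈ H, e.card = 3)
    (hF : F2Free H) {e f g : Finset (Fin n)} (he : e ∈ H) (hf : f ∈ H) (hg : g ∈ H)
    (hfe : (f ∩ e).Nonempty) (hgf : (g ∩ f).Nonempty) : (g ∩ e).Nonempty := by
  by_contra hemp
  rw [not_nonempty_iff_eq_empty] at hemp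
  have h2 : 2 ≤ (g ∩ f).card := inter_two hF hf hg hgf
  have h2' : 2 ≤ (f ∩ e).card := inter_two hF he hf hfe
  have hsub : g ∩ f ⊆ f \ e := by
    intro x hx
    simp only [mem_inter] at hx
    simp only [mem_sdiff]
    refine ⟨hx.2, fun hxe => ?_⟩
    have : x ∈ g ∩ e := mem_inter.mpr ⟨hx.1, hxe⟩
    simp [hemp] at this
  have hcard := card_le_card hsub
  have : (f \ e).card = f.card - (f ∩ e).card := by
    rw [← sdiff_inter_self_left]; exact card_sdiff_of_subset inter_subset_left
  have := h3 f hf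
  omega

lemma trace_card {H : Finset (Finset (Fin n))} (h3 : ∀ e ∈ H, e.card = 3)
    (hF : F2Free H) {e f : Finset (Fin n)} (he : e ∈ H) (hf : f ∈ H)
    (hne : (f ∩ e).Nonempty) (hfe : f ≠ e) : (f ∩ e).card = 2 := by
  have h2 := inter_two hF he hf hne
  have hle : (f ∩ e).card ≤ 3 := by
    have := card_le_card (inter_subset_right : f ∩ e ⊆ e)
    have := h3 e he
    omega
  rcases Nat.lt_or_ge (f ∩ e).card 3 with h | h
  · omega
  · exfalso
    have heq : f ∩ e = e := eq_of_subset_of_card_le inter_subset_right (by rw [h3 e he]; exact h)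
    have : e ⊆ f := by rw [← heq]; exact inter_subset_left
    exact hfe (eq_of_subset_of_card_le this (by rw [h3 e he, h3 f hf]) ).symm

lemma sdiff_sing {e f : Finset (Fin n)} (hf3 : f.card = 3) (h2 : (f ∩ e).card = 2) :
    ∃ x, f \ e = {x} := by
  have : (f \ e).card = 1 := by
    have h := card_sdiff_of_subset (inter_subset_left : f ∩ e ⊆ f)
    rw [sdiff_inter_self_left] at h
    omega
  exact card_eq_one.mp this

lemma dichotomy {H : Finset (Finset (Fin n))} (h3 : ∀ e ∈ H, e.card = 3)
    (hF : F2Free H) {e : Finset (Fin n)} (he : e ∈ H) :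
    (∃ S : Finset (Fin n), S.card ≤ 4 ∧
      ∀ f ∈ H.filter (fun f => (f ∩ e).Nonempty), f ⊆ S) ∨
    (∃ p q : Fin n, p ≠ q ∧ ∀ f ∈ H.filter (fun f => (f ∩ e).Nonempty), p ∈ f ∧ q ∈ f) := by
  set C := H.filter (fun f => (f ∩ e).Nonempty) with hC
  have hmem : ∀ f ∈ C, f ∈ H ∧ (f ∩ e).Nonempty := by
    intro f hf; simpa [hC] using hf
  by_cases hA : ∀ f ∈ C, ∀ g ∈ C, f ≠ e → g ≠ e → f ∩ e = g ∩ e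
  · -- book case
    right
    by_cases hB : ∃ f₀ ∈ C, f₀ ≠ e
    · obtain ⟨f₀, hf₀C, hf₀e⟩ := hB
      obtain ⟨hf₀H, hf₀ne⟩ := hmem f₀ hf₀C
      have h2 : (f₀ ∩ e).card = 2 := trace_card h3 hF he hf₀H hf₀ne hf₀e
      obtain ⟨p, q, hpq, hP⟩ := card_eq_two.mp h2
      refine ⟨p, q, hpq, fun f hf => ?_⟩
      obtain ⟨hfH, hfne⟩ := hmem f hf
      by_cases hfe : f = e
      · have hpe : p ∈ f₀ ∩ e := by rw [hP]; simp
        have hqe : q ∈ f₀ ∩ e := by rw [hP]; simp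
        rw [hfe]
        exact ⟨(mem_inter.mp hpe).2, (mem_inter.mp hqe).2⟩
      · have := hA f hf f₀ hf₀C hfe hf₀e
        have hpe : p ∈ f ∩ e := by rw [this, hP]; simp
        have hqe : q ∈ f ∩ e := by rw [this, hP]; simp
        exact ⟨(mem_inter.mp hpe).1, (mem_inter.mp hqe).1⟩
    · push_neg at hB
      obtain ⟨p, hp, q, hq, hpq⟩ := one_lt_card.mp (by rw [h3 e he]; norm_num : 1 < e.card)
      exact ⟨p, q, hpq, fun f hf => by rw [hB f hf]; exact ⟨hp, hq⟩⟩
  · -- 4-set case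
    left
    push_neg at hA
    obtain ⟨f, hfC, g, hgC, hfe, hge, hFG⟩ := hA
    obtain ⟨hfH, hfne⟩ := hmem f hfC
    obtain ⟨hgH, hgne⟩ := hmem g hgC
    have hF2 : (f ∩ e).card = 2 := trace_card h3 hF he hfH hfne hfe
    have hG2 : (g ∩ e).card = 2 := trace_card h3 hF he hgH hgne hge
    have he3 := h3 e he
    -- the intersection of the two traces has card 1
    have hFGsub : (f ∩ e) ∪ (g ∩ e) ⊆ e := union_subset inter_subset_right inter_subset_right
    have hunion : ((f ∩ e) ∪ (g ∩ e)).card ≤ 3 := by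
      have := card_le_card hFGsub; omega
    have hcapcup := card_union_add_card_inter (f ∩ e) (g ∩ e)
    have hFGint1 : ((f ∩ e) ∩ (g ∩ e)).card = 1 := by
      have hle : ((f ∩ e) ∩ (g ∩ e)).card ≤ 2 := by
        have := card_le_card (inter_subset_left : (f ∩ e) ∩ (g ∩ e) ⊆ f ∩ e); omega
      rcases Nat.lt_or_ge ((f ∩ e) ∩ (g ∩ e)).card 2 with h | h
      · omega
      · exfalso
        have : (f ∩ e) ∩ (g ∩ e) = f ∩ e :=
          eq_of_subset_of_card_le inter_subset_left (by omega)
        have hsub : f ∩ e ⊆ g ∩ e := by rw [← this]; exact inter_subset_right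
        exact hFG (eq_of_subset_of_card_le hsub (by omega))
    -- f and g intersect
    have hfg_ne : f ≠ g := fun h => hFG (by rw [h])
    have hfgne : (g ∩ f).Nonempty := by
      have : ((f ∩ e) ∩ (g ∩ e)).Nonempty := card_pos.mp (by omega)
      obtain ⟨a, ha⟩ := this
      simp only [mem_inter] at ha
      exact ⟨a, mem_inter.mpr ⟨ha.2.1, ha.1.1⟩⟩
    have hfg2 : 2 ≤ (g ∩ f).card := inter_two hF hfH hgH hfgne
    obtain ⟨x, hx⟩ := sdiff_sing (h3 f hfH) hF2
    obtain ⟨y, hy⟩ := sdiff_sing (h3 g hgH) hG2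
    -- show x = y
    have hxy : x = y := by
      have hsplit : ∃ z ∈ g ∩ f, z ∉ e := by
        by_contra hcon
        push_neg at hcon
        have : g ∩ f ⊆ (f ∩ e) ∩ (g ∩ e) := by
          intro z hz
          simp only [mem_inter] at hz ⊢
          exact ⟨⟨hz.2, hcon z (mem_inter.mpr hz)⟩, ⟨hz.1, hcon z (mem_inter.mpr hz)⟩⟩
        have := card_le_card this; omega
      obtain ⟨z, hz, hze⟩ := hsplit
      simp only [mem_inter] at hz
      have hzx : z ∈ f \ e := mem_sdiff.mpr ⟨hz.2, hze⟩
      have hzy : z ∈ g \ e := mem_sdiff.mpr ⟨hz.1, hze⟩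
      rw [hx, mem_singleton] at hzx
      rw [hy, mem_singleton] at hzy
      rw [← hzx, ← hzy]
    subst hxy
    have hxe : x ∉ e := by
      have : x ∈ f \ e := hx ▸ mem_singleton_self x
      exact (mem_sdiff.mp this).2
    refine ⟨insert x e, by rw [card_insert_of_notMem hxe]; omega, ?_⟩
    intro h hhC
    obtain ⟨hhH, hhne⟩ := hmem h hhC
    intro w hwh
    by_contra hwS
    simp only [mem_insert] at hwS
    push_neg at hwS
    obtain ⟨hwx, hwe⟩ := hwS
    have hhe : h ≠ e := fun hh => hwe (hh ▸ hwh)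
    have hT2 : (h ∩ e).card = 2 := trace_card h3 hF he hhH hhne hhe
    obtain ⟨w', hw'⟩ := sdiff_sing (h3 h hhH) hT2
    have hww' : w' = w := by
      have : w ∈ h \ e := mem_sdiff.mpr ⟨hwh, hwe⟩
      rw [hw', mem_singleton] at this; exact this.symm
    rw [hww'] at hw'
    have hxh : x ∉ h := by
      intro hxh
      have : x ∈ h \ e := mem_sdiff.mpr ⟨hxh, hxe⟩
      rw [hw', mem_singleton] at this
      exact hwx this.symm
    have key : ∀ u, u ∈ H → (u ∩ e).card = 2 → u \ e = {x} → h ∩ e = u ∩ e := by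
      intro u huH hu2 hux
      have heq : h ∩ u = (h ∩ e) ∩ (u ∩ e) := by
        ext z
        simp only [mem_inter]
        constructor
        · rintro ⟨hzh, hzu⟩
          have hze : z ∈ e := by
            by_contra hze
            have : z ∈ u \ e := mem_sdiff.mpr ⟨hzu, hze⟩
            rw [hux, mem_singleton] at this
            exact hxh (this ▸ hzh)
          exact ⟨⟨hzh, hze⟩, hzu, hze⟩
        · rintro ⟨⟨hzh, _⟩, hzu, _⟩; exact ⟨hzh, hzu⟩
      have hne1 := hF h hhH u huH
      have hsubU : (h ∩ e) ∪ (u ∩ e) ⊆ e := union_subset inter_subset_right inter_subset_right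
      have hU3 : ((h ∩ e) ∪ (u ∩ e)).card ≤ 3 := by have := card_le_card hsubU; omega
      have hcc := card_union_add_card_inter (h ∩ e) (u ∩ e)
      have hsub1 : (h ∩ e) ∩ (u ∩ e) ⊆ h ∩ e := inter_subset_left
      have hcard2 : ((h ∩ e) ∩ (u ∩ e)).card = 2 := by
        have hle := card_le_card hsub1
        rw [heq] at hne1
        omega
      have heq2 : (h ∩ e) ∩ (u ∩ e) = h ∩ e := eq_of_subset_of_card_le hsub1 (by omega)
      have hss : h ∩ e ⊆ u ∩ e := by rw [← heq2]; exact inter_subset_right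
      exact eq_of_subset_of_card_le hss (by omega)
    exact hFG ((key f hfH hF2 hx).symm.trans (key g hgH hG2 hy))

lemma comp_bound {H : Finset (Finset (Fin n))} (h3 : ∀ e ∈ H, e.card = 3)
    (hF : F2Free H) {e : Finset (Fin n)} (he : e ∈ H) :
    (H.filter (fun f => (f ∩ e).Nonempty)).card + 2 ≤
      (((H.filter (fun f => (f ∩ e).Nonempty)).sup id).card) ∨
    ((((H.filter (fun f => (f ∩ e).Nonempty)).sup id).card) = 4 ∧
      (H.filter (fun f => (f ∩ e).Nonempty)).card ≤ 4) := by
  set C := H.filter (fun f => (f ∩ e).Nonempty) with hC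
  set U := C.sup id with hU
  have heC : e ∈ C := by
    rw [hC, mem_filter]
    exact ⟨he, by rw [inter_self]; exact card_pos.mp (by rw [h3 e he]; norm_num)⟩
  have hsubU : ∀ f ∈ C, f ⊆ U := fun f hf => Finset.le_sup (f := id) hf
  have heU : e ⊆ U := hsubU e heC
  have hU3 : 3 ≤ U.card := by
    have := card_le_card heU; rw [h3 e he] at this; exact this
  have hCpow : C ⊆ U.powersetCard 3 := by
    intro f hf
    rw [mem_powersetCard]
    exact ⟨hsubU f hf, h3 f (mem_filter.mp hf).1⟩
  have hCchoose : C.card ≤ U.card.choose 3 := by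
    have := card_le_card hCpow
    rwa [card_powersetCard] at this
  rcases dichotomy h3 hF he with ⟨S, hS4, hSall⟩ | ⟨p, q, hpq, hall⟩
  · have hUS : U ⊆ S := Finset.sup_le fun f hf => hSall f hf
    have hU4 : U.card ≤ 4 := le_trans (card_le_card hUS) hS4
    rcases Nat.lt_or_ge U.card 4 with h4 | h4
    · -- U.card = 3, so U = e and C = {e}
      left
      have hUe : U = e := (eq_of_subset_of_card_le heU (by rw [h3 e he]; omega)).symm
      have : C ⊆ {e} := by
        intro f hf
        rw [mem_singleton]
        have hfU : f ⊆ e := hUe ▸ hsubU f hf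
        exact eq_of_subset_of_card_le hfU (by rw [h3 f (mem_filter.mp hf).1, h3 e he])
      have := card_le_card this
      rw [card_singleton] at this
      omega
    · right
      have : U.card = 4 := by omega
      refine ⟨this, ?_⟩
      rw [this] at hCchoose
      simpa using hCchoose
  · -- book case
    left
    have hpqU : ({p, q} : Finset (Fin n)) ⊆ U := by
      intro z hz
      rcases mem_insert.mp hz with rfl | hz
      · exact heU (hall e heC).1
      · rw [mem_singleton] at hz; subst hz; exact heU (hall e heC).2
    have hpq2 : ({p, q} : Finset (Fin n)).card = 2 := card_pair hpq
    have hsubpq : ∀ f ∈ C, ({p, q} : Finset (Fin n)) ⊆ f := by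
      intro f hf z hz
      rcases mem_insert.mp hz with rfl | hz
      · exact (hall f hf).1
      · rw [mem_singleton] at hz; subst hz; exact (hall f hf).2
    have hsd1 : ∀ f ∈ C, (f \ {p, q}).card = 1 := by
      intro f hf
      rw [card_sdiff_of_subset (hsubpq f hf), hpq2, h3 f (mem_filter.mp hf).1]
    have hinj : Set.InjOn (· \ ({p, q} : Finset (Fin n))) C := by
      intro f hf g hg hfg
      rw [← union_sdiff_of_subset (hsubpq f hf), ← union_sdiff_of_subset (hsubpq g hg)]
      simp only at hfg
      rw [hfg]
    have himg : C.image (· \ ({p, q} : Finset (Fin n))) ⊆ (U \ {p, q}).powersetCard 1 := by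
      intro s hs
      obtain ⟨f, hf, rfl⟩ := mem_image.mp hs
      rw [mem_powersetCard]
      exact ⟨sdiff_subset_sdiff (hsubU f hf) (Subset.refl _), hsd1 f hf⟩
    have hcount : C.card ≤ (U \ {p, q}).card := by
      calc C.card = (C.image (· \ ({p, q} : Finset (Fin n)))).card :=
            (card_image_of_injOn hinj).symm
        _ ≤ ((U \ {p, q}).powersetCard 1).card := card_le_card himg
        _ = (U \ {p, q}).card.choose 1 := card_powersetCard _ _
        _ = (U \ {p, q}).card := Nat.choose_one_right _
    have hsd := card_sdiff_of_subset hpqU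
    rw [hpq2] at hsd
    omega

lemma main_bound (H : Finset (Finset (Fin n))) : (∀ e ∈ H, e.card = 3) → F2Free H →
    H.card ≤ (H.sup id).card ∧ ((H.sup id).card ≤ H.card + 1 → 4 ∣ (H.sup id).card) := by
  induction H using Finset.strongInduction with
  | _ H ih =>
  intro h3 hF
  rcases H.eq_empty_or_nonempty with rfl | ⟨e, he⟩
  · simp
  set C := H.filter (fun f => (f ∩ e).Nonempty) with hCdef
  set H' := H \ C with hH'def
  have hCsub : C ⊆ H := filter_subset _ _
  have heC : e ∈ C := by
    rw [hCdef, mem_filter]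
    exact ⟨he, by rw [inter_self]; exact card_pos.mp (by rw [h3 e he]; norm_num)⟩
  have hH'ss : H' ⊂ H := Finset.sdiff_ssubset hCsub ⟨e, heC⟩
  have h3' : ∀ f ∈ H', f.card = 3 := fun f hf => h3 f (mem_sdiff.mp hf).1
  have hF' : F2Free H' := fun a ha b hb => hF a (mem_sdiff.mp ha).1 b (mem_sdiff.mp hb).1
  obtain ⟨ih1, ih2⟩ := ih H' hH'ss h3' hF'
  have hdis : Disjoint (C.sup id) (H'.sup id) := by
    rw [disjoint_left]
    intro x hxC hxH'
    rw [Finset.mem_sup] at hxC hxH'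
    obtain ⟨f, hfC, hxf⟩ := hxC
    obtain ⟨h, hhH', hxh⟩ := hxH'
    have hhH : h ∈ H := (mem_sdiff.mp hhH').1
    have hfH : f ∈ H := (mem_filter.mp hfC).1
    have hfe : (f ∩ e).Nonempty := (mem_filter.mp hfC).2
    have hhe : (h ∩ e).Nonempty :=
      meets_trans h3 hF he hfH hhH hfe ⟨x, mem_inter.mpr ⟨hxh, hxf⟩⟩
    exact (mem_sdiff.mp hhH').2 (mem_filter.mpr ⟨hhH, hhe⟩)
  have hunion : H = C ∪ H' := by rw [hH'def, union_sdiff_of_subset hCsub]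
  have hsup : H.sup id = C.sup id ∪ H'.sup id := by
    conv_lhs => rw [hunion]
    rw [Finset.sup_union, Finset.sup_eq_union]
  have hcard_sup : (H.sup id).card = (C.sup id).card + (H'.sup id).card := by
    rw [hsup, card_union_of_disjoint hdis]
  have hcardH : H.card = C.card + H'.card := by
    conv_lhs => rw [hunion]
    rw [card_union_of_disjoint Finset.disjoint_sdiff]
  rw [hcard_sup, hcardH]
  have hcbfull := comp_bound h3 hF he
  rw [← hCdef] at hcbfull
  rcases hcbfull with hcb | ⟨hU4, hC4⟩
  · exact ⟨by omega, by omega⟩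
  · refine ⟨by omega, fun hle => ?_⟩
    have h4U' : 4 ∣ (H'.sup id).card := ih2 (by omega)
    omega

def grp (n j : ℕ) : Finset (Fin n) := Finset.univ.filter (fun x => (x : ℕ) / 4 = j)

def Hc (n : ℕ) : Finset (Finset (Fin n)) :=
  (Finset.range ((n + 3) / 4)).biUnion (fun j => (grp n j).powersetCard 3)

lemma grp_eq (n j : ℕ) :
    grp n j = (Finset.Ico (4 * j) (min (4 * j + 4) n)).attachFin
      (fun m hm => by simp only [mem_Ico, lt_min_iff] at hm; exact hm.2.2) := by
  ext x
  simp only [grp, mem_filter, mem_univ, true_and, Finset.mem_attachFin, mem_Ico, lt_min_iff]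
  have := x.isLt
  omega

lemma grp_card (n j : ℕ) : (grp n j).card = min (4 * j + 4) n - 4 * j := by
  rw [grp_eq, Finset.card_attachFin, Nat.card_Ico]

lemma grp_card_le (n j : ℕ) : (grp n j).card ≤ 4 := by
  rw [grp_card]; omega

lemma Hc_uniform (n : ℕ) : ∀ e ∈ Hc n, e.card = 3 := by
  intro e he
  rw [Hc, mem_biUnion] at he
  obtain ⟨j, _, hj⟩ := he
  exact (mem_powersetCard.mp hj).2

lemma Hc_free (n : ℕ) : F2Free (Hc n) := by
  intro e₁ h₁ e₂ h₂ hcard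
  rw [Hc, mem_biUnion] at h₁ h₂
  obtain ⟨j₁, _, hj₁⟩ := h₁
  obtain ⟨j₂, _, hj₂⟩ := h₂
  rw [mem_powersetCard] at hj₁ hj₂
  obtain ⟨x, hx⟩ := card_pos.mp (by omega : 0 < (e₁ ∩ e₂).card)
  rw [mem_inter] at hx
  have hjj : j₁ = j₂ := by
    have h1 := hj₁.1 hx.1
    have h2 := hj₂.1 hx.2
    simp only [grp, mem_filter] at h1 h2
    omega
  subst hjj
  have hsub : e₁ ∪ e₂ ⊆ grp n j₁ := union_subset hj₁.1 hj₂.1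
  have hle := card_le_card hsub
  have := grp_card_le n j₁
  have hcc := card_union_add_card_inter e₁ e₂
  omega

lemma Hc_card (n : ℕ) :
    (Hc n).card = 4 * (n / 4) + (if n % 4 = 3 then 1 else 0) := by
  rw [Hc, card_biUnion]
  · have hterm : ∀ j ∈ Finset.range ((n + 3) / 4),
        ((grp n j).powersetCard 3).card = (min (4 * j + 4) n - 4 * j).choose 3 := by
      intro j _
      rw [card_powersetCard, grp_card]
    rw [Finset.sum_congr rfl hterm]
    have hmain : ∀ j ∈ Finset.range (n / 4), (min (4 * j + 4) n - 4 * j).choose 3 = 4 := by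
      intro j hj
      rw [Finset.mem_range] at hj
      have h1 : 4 * j + 4 ≤ n := by omega
      rw [min_eq_left h1]
      norm_num
    by_cases h0 : n % 4 = 0
    · have hK : (n + 3) / 4 = n / 4 := by omega
      rw [hK, Finset.sum_congr rfl hmain, Finset.sum_const, smul_eq_mul]
      simp [h0]
      ring
    · have hK : (n + 3) / 4 = n / 4 + 1 := by omega
      rw [hK, Finset.sum_range_succ, Finset.sum_congr rfl hmain, Finset.sum_const, smul_eq_mul]
      have hmin : min (4 * (n / 4) + 4) n = n := by omega
      rw [hmin]
      have hmod : n - 4 * (n / 4) = n % 4 := by omega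
      rw [hmod]
      have h4 : n % 4 = 1 ∨ n % 4 = 2 ∨ n % 4 = 3 := by omega
      rcases h4 with h | h | h <;> rw [h] <;> simp [Nat.choose_eq_zero_of_lt] <;> omega
  · intro i hi j hj hij
    rw [Function.onFun, Finset.disjoint_left]
    intro e hei hej
    rw [mem_powersetCard] at hei hej
    obtain ⟨x, hx⟩ := card_pos.mp (by rw [hei.2]; norm_num : 0 < e.card)
    have h1 := hei.1 hx
    have h2 := hej.1 hx
    simp only [grp, mem_filter] at h1 h2
    exact hij (by omega)


/-- Erdős–Sós: for all `n ≥ 3`, `f(n,2)` equals `n` if `n ≡ 0 (mod 4)`,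
`n-1` if `n ≡ 1 (mod 4)`, and `n-2` if `n ≡ 2, 3 (mod 4)`. -/
theorem stmt_14 (n : ℕ) (hn : 3 ≤ n) :
    fn2 n = if n % 4 = 0 then n else if n % 4 = 1 then n - 1 else n - 2 := by
  set T := if n % 4 = 0 then n else if n % 4 = 1 then n - 1 else n - 2 with hT
  have hub : ∀ m ∈ {m | ∃ H : Finset (Finset (Fin n)),
      (∀ e ∈ H, e.card = 3) ∧ F2Free H ∧ H.card = m}, m ≤ T := by
    rintro m ⟨H, h3, hF, rfl⟩
    obtain ⟨h1, h2⟩ := main_bound H h3 hF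
    have hUn : (H.sup id).card ≤ n := by
      have := card_le_univ (H.sup id)
      simpa using this
    by_cases hle : (H.sup id).card ≤ H.card + 1
    · have := h2 hle
      rw [hT]
      split_ifs <;> omega
    · rw [hT]
      split_ifs <;> omega
  have hmem : T ∈ {m | ∃ H : Finset (Finset (Fin n)),
      (∀ e ∈ H, e.card = 3) ∧ F2Free H ∧ H.card = m} :=
    ⟨Hc n, Hc_uniform n, Hc_free n, by rw [Hc_card, hT]; split_ifs <;> omega⟩
  rw [fn2]
  exact le_antisymm (csSup_le (Set.nonempty_of_mem hmem) hub) (le_csSup ⟨T, hub⟩ hmem)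
end

section
/- Let G be a simple graph with minimum degree at least k−2 (k ≥ 5) in which at most one vertex has degree less than k−1, and let M ⊆ E(G) with |M| ≤ k−3 such that G − M is disconnected. If F_1 is a smallest component of G − M, then 2 ≤ |V(F_1)| ≤ k−1 and the number of edges of G between V(F_1) and its complement is at least |V(F_1)|·(k − |V(F_1)|) − 1 ≥ k − 2, a contradiction; hence no such M exists. -/
open Finset

/-- let `G` be a graph on at most `2k-1` vertices (`k ≥ 5`) with minimum
degree at least `k-2`, at most one vertex of degree less than `k-1`, and all other
vertices of degree exactly `k-1`. Then there is no set `M` of at most `k-3` edges whose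
deletion disconnects `G`; i.e. `G - M` is connected for every such `M`. -/
theorem stmt_15 {V : Type*} [Fintype V] [Nonempty V] (k : ℕ) (hk : 5 ≤ k)
    (G : SimpleGraph V) [DecidableRel G.Adj]
    (hcard : Fintype.card V ≤ 2 * k - 1)
    (hmin : ∀ v : V, k - 2 ≤ G.degree v)
    (hone : ({v : V | G.degree v < k - 1}).Subsingleton)
    (hdeg : ∀ v : V, ¬ G.degree v < k - 1 → G.degree v = k - 1) :
    ∀ M : Set (Sym2 V), M ⊆ G.edgeSet → M.ncard ≤ k - 3 →
      (G.deleteEdges M).Connected := by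
  classical
  intro M hMsub hMcard
  by_contra hnc
  set G' := G.deleteEdges M with hG'def
  rw [SimpleGraph.connected_iff] at hnc
  push_neg at hnc
  have hnp : ¬ G'.Preconnected := fun h => not_isEmpty_of_nonempty V (hnc h)
  obtain ⟨u, hu⟩ := not_forall.mp hnp
  obtain ⟨w, hw⟩ := not_forall.mp hu
  set A : Finset V := Finset.univ.filter (fun x => G'.Reachable u x) with hAdef
  have huA : u ∈ A := Finset.mem_filter.mpr ⟨Finset.mem_univ u, SimpleGraph.Reachable.refl u⟩
  have hwA : w ∉ A := by simp only [hAdef, mem_filter, mem_univ, true_and]; exact hw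
  have hclosed : ∀ v x, v ∈ A → G'.Adj v x → x ∈ A := by
    intro v x hv hadj
    simp only [hAdef, mem_filter, mem_univ, true_and] at hv ⊢
    exact hv.trans hadj.reachable
  have hcrossA : ∀ v x, v ∈ A → x ∉ A → G.Adj v x → s(v, x) ∈ M := by
    intro v x hv hx hadj
    by_contra hmem
    exact hx (hclosed v x hv (by rw [hG'def, SimpleGraph.deleteEdges_adj]; exact ⟨hadj, hmem⟩))
  obtain ⟨S, hSne, hScne, hSsmall, hcross⟩ :
      ∃ S : Finset V, S.Nonempty ∧ Sᶜ.Nonempty ∧ S.card ≤ Sᶜ.card ∧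
        ∀ v ∈ S, ∀ x ∈ Sᶜ, G.Adj v x → s(v, x) ∈ M := by
    by_cases h : A.card ≤ Aᶜ.card
    · exact ⟨A, ⟨u, huA⟩, ⟨w, Finset.mem_compl.mpr hwA⟩, h,
        fun v hv x hx hadj => hcrossA v x hv (Finset.mem_compl.mp hx) hadj⟩
    · refine ⟨Aᶜ, ⟨w, Finset.mem_compl.mpr hwA⟩, by rw [compl_compl]; exact ⟨u, huA⟩,
        by rw [compl_compl]; omega, ?_⟩
      intro v hv x hx hadj
      rw [compl_compl] at hx
      have := hcrossA x v hx (Finset.mem_compl.mp hv) hadj.symm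
      rwa [Sym2.eq_swap] at this
  set s := S.card with hs
  have hs1 : 1 ≤ s := Finset.card_pos.mpr hSne
  have hsk : s + 1 ≤ k := by
    have := Finset.card_add_card_compl S
    omega
  -- the crossing pairs
  set P : Finset (V × V) := (S ×ˢ Sᶜ).filter (fun p => G.Adj p.1 p.2) with hPdef
  -- P injects into M
  have hPM : P.card ≤ M.ncard := by
    have himg : (fun p : V × V => s(p.1, p.2)) '' ↑P ⊆ M := by
      rintro e ⟨⟨v, x⟩, hp, rfl⟩
      simp only [hPdef, Finset.coe_filter, Set.mem_setOf_eq, Finset.mem_product] at hp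
      exact hcross v hp.1.1 x hp.1.2 hp.2
    have hinj : Set.InjOn (fun p : V × V => s(p.1, p.2)) ↑P := by
      rintro ⟨a, b⟩ hab ⟨c, d⟩ hcd he
      simp only [hPdef, Finset.coe_filter, Set.mem_setOf_eq, Finset.mem_product,
        Finset.mem_compl] at hab hcd
      simp only [Sym2.eq, Sym2.rel_iff', Prod.mk.injEq, Prod.swap_prod_mk] at he
      rcases he with ⟨rfl, rfl⟩ | ⟨rfl, rfl⟩
      · rfl
      · exact absurd hab.1.1 hcd.1.2
    calc P.card = ((fun p : V × V => s(p.1, p.2)) '' ↑P).ncard := by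
          rw [Set.ncard_image_of_injOn hinj, Set.ncard_coe_finset]
      _ ≤ M.ncard := Set.ncard_le_ncard himg (Set.toFinite M)
  -- P's cardinality as a sum
  have hPsum : P.card = ∑ v ∈ S, (Sᶜ.filter (G.Adj v)).card := by
    have hPb : P = S.biUnion
        (fun v => (Sᶜ.filter (G.Adj v)).map ⟨(v, ·), Prod.mk_right_injective v⟩) := by
      ext ⟨a, b⟩
      simp only [hPdef, Finset.mem_filter, Finset.mem_product, Finset.mem_biUnion,
        Finset.mem_map, Function.Embedding.coeFn_mk, Prod.mk.injEq]
      constructor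
      · rintro ⟨⟨ha, hb⟩, hadj⟩
        exact ⟨a, ha, b, ⟨hb, hadj⟩, rfl, rfl⟩
      · rintro ⟨v, hv, x, hx, rfl, rfl⟩
        exact ⟨⟨hv, hx.1⟩, hx.2⟩
    rw [hPb, Finset.card_biUnion]
    · simp [Finset.card_map]
    · intro a _ b _ hab
      simp only [Finset.disjoint_left, Finset.mem_map, Function.Embedding.coeFn_mk]
      rintro ⟨c, d⟩ ⟨x, _, hx⟩ ⟨y, _, hy⟩
      rw [Prod.mk.injEq] at hx hy
      exact hab (hx.1.trans hy.1.symm)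
  -- per-vertex degree bound
  have hvert : ∀ v ∈ S, G.degree v + 1 ≤ s + (Sᶜ.filter (G.Adj v)).card := by
    intro v hv
    have hsub : G.neighborFinset v ⊆ S.erase v ∪ Sᶜ.filter (G.Adj v) := by
      intro x hx
      rw [SimpleGraph.mem_neighborFinset] at hx
      by_cases hxS : x ∈ S
      · exact Finset.mem_union_left _ (Finset.mem_erase.mpr
          ⟨fun he => G.irrefl (he ▸ hx), hxS⟩)
      · exact Finset.mem_union_right _ (Finset.mem_filter.mpr ⟨Finset.mem_compl.mpr hxS, hx⟩)
    have hle := Finset.card_le_card hsub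
    have hun := Finset.card_union_le (S.erase v) (Sᶜ.filter (G.Adj v))
    rw [SimpleGraph.card_neighborFinset_eq_degree] at hle
    have her : (S.erase v).card = s - 1 := Finset.card_erase_of_mem hv
    omega
  -- sum of degrees bound
  have hsum : s * (k - 1) ≤ (∑ v ∈ S, G.degree v) + 1 := by
    set B := S.filter (fun v => G.degree v < k - 1) with hBdef
    have hB1 : B.card ≤ 1 := by
      rw [Finset.card_le_one]
      intro a ha b hb
      rw [hBdef, Finset.mem_filter] at ha hb
      exact hone ha.2 hb.2
    set C := S.filter (fun v => ¬ G.degree v < k - 1) with hCdef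
    have hsplit : ∑ v ∈ S, G.degree v =
        (∑ v ∈ B, G.degree v) + ∑ v ∈ C, G.degree v :=
      (Finset.sum_filter_add_sum_filter_not S (fun v => G.degree v < k - 1) _).symm
    have hgood : ∀ v ∈ C, G.degree v = k - 1 := by
      intro v hv
      rw [hCdef, Finset.mem_filter] at hv
      exact hdeg v hv.2
    have hsumgood : ∑ v ∈ C, G.degree v = C.card * (k - 1) := by
      rw [Finset.sum_congr rfl hgood, Finset.sum_const, smul_eq_mul]
    have hsumbad : B.card * (k - 2) ≤ ∑ v ∈ B, G.degree v := by
      calc B.card * (k - 2) = ∑ _v ∈ B, (k - 2) := by rw [Finset.sum_const, smul_eq_mul]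
        _ ≤ ∑ v ∈ B, G.degree v := Finset.sum_le_sum (fun v _ => hmin v)
    have hbc : B.card + C.card = s :=
      Finset.card_filter_add_card_filter_not _
    rcases Nat.le_one_iff_eq_zero_or_eq_one.mp hB1 with hb | hb
    · have hc : C.card = s := by omega
      rw [hsplit, hsumgood, hc]
      have : (0:ℕ) ≤ ∑ v ∈ B, G.degree v := Nat.zero_le _
      linarith
    · have hc : C.card = s - 1 := by omega
      rw [hsplit, hsumgood, hc]
      rw [hb] at hsumbad
      have key : s * (k - 1) = (s - 1) * (k - 1) + (k - 1) := by
        conv_lhs => rw [← Nat.sub_add_cancel hs1]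
        rw [add_mul, one_mul]
      have hk2 : k - 2 + 1 = k - 1 := by omega
      linarith
  -- combine
  have hcomb : s * k ≤ P.card + s * s + 1 := by
    have h1 : ∑ v ∈ S, (G.degree v + 1) ≤ ∑ v ∈ S, (s + (Sᶜ.filter (G.Adj v)).card) :=
      Finset.sum_le_sum hvert
    rw [Finset.sum_add_distrib, Finset.sum_add_distrib, Finset.sum_const, Finset.sum_const,
      smul_eq_mul, smul_eq_mul, mul_one, ← hPsum, ← hs] at h1
    have key : s * (k - 1) + s = s * k := by
      have hk1 : k - 1 + 1 = k := by omega
      calc s * (k - 1) + s = s * ((k - 1) + 1) := by ring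
        _ = s * k := by rw [hk1]
    linarith
  -- final contradiction
  have hM3 : M.ncard + 3 ≤ k := by omega
  have h1 : (1:ℤ) ≤ (s:ℤ) := by exact_mod_cast hs1
  have h2 : (s:ℤ) + 1 ≤ (k:ℤ) := by exact_mod_cast hsk
  have h3 : (s:ℤ) * k ≤ (P.card:ℤ) + s * s + 1 := by exact_mod_cast hcomb
  have h4 : (P.card:ℤ) ≤ (M.ncard:ℤ) := by exact_mod_cast hPM
  have h5 : (M.ncard:ℤ) + 3 ≤ (k:ℤ) := by exact_mod_cast hM3
  have hprod : (0:ℤ) ≤ ((s:ℤ) - 1) * ((k:ℤ) - 1 - s) :=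
    mul_nonneg (by linarith) (by linarith)
  nlinarith
end
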